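/- arXiv:2206.03005 — 3 statements merged into one kernel-verified Lean document; each statement's English description precedes it below -/
import Mathlib

section
/- Let π_i : (X_i,T_i) → (Y_i,S_i) (i = 1,2) be factor maps between dynamical systems and consider the product factor map π₁ × π₂ : (X₁ × X₂, T₁ × T₂) → (Y₁ × Y₂, S₁ × S₂). Then mdim(π₁ × π₂, T₁ × T₂) ≤ mdim(π₁,T₁) + mdim(π₂,T₂). -/
open scoped ENNReal

/-- An abstract finite simplicial complex on a vertex type `V`: a finite, downward closed
family of nonempty finite sets of vertices. -/
structure FinSimpComplex (V : Type) where
  faces : Finset (Finset V)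
  nonempty_of_mem : ∀ s ∈ faces, s.Nonempty
  down_closed : ∀ s ∈ faces, ∀ t ⊆ s, t.Nonempty → t ∈ faces

namespace FinSimpComplex

/-- The geometric realization of `K`: the set of barycentric coordinate functions supported
on a face of `K`. -/
def space {V : Type} [Fintype V] (K : FinSimpComplex V) : Set (V → ℝ) :=
  {x | (∀ v, 0 ≤ x v) ∧ (∑ v, x v = 1) ∧ ∃ s ∈ K.faces, ∀ v, x v ≠ 0 → v ∈ s}

/-- `K` has dimension at most `n`. -/
def dimLE {V : Type} (K : FinSimpComplex V) (n : ℕ) : Prop :=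
  ∀ s ∈ K.faces, s.card ≤ n + 1

/-- The dimension of `K` (with value `0` for the empty complex). -/
def dim {V : Type} (K : FinSimpComplex V) : ℕ :=
  K.faces.sup fun s => s.card - 1

/-- The vertex set of `K`. -/
def vertexSet {V : Type} [Fintype V] [DecidableEq V] (K : FinSimpComplex V) : Finset V :=
  Finset.univ.filter fun v => {v} ∈ K.faces

/-- The open star of the vertex `v` in the realization of `K`: the union of the interiors of
the simplices containing `v`, i.e. the points whose `v`-th barycentric coordinate is nonzero. -/
def star {V : Type} [Fintype V] (K : FinSimpComplex V) (v : V) : Set ↥K.space :=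
  {x | (x : V → ℝ) v ≠ 0}

/-- The full subcomplex of `K` spanned by the vertex set `A`. -/
def fullSub {V : Type} [DecidableEq V] (K : FinSimpComplex V) (A : Finset V) :
    FinSimpComplex V where
  faces := K.faces.filter fun s => s ⊆ A
  nonempty_of_mem s hs := K.nonempty_of_mem s (Finset.mem_filter.1 hs).1
  down_closed s hs t hts htne := Finset.mem_filter.2
    ⟨K.down_closed s (Finset.mem_filter.1 hs).1 t hts htne,
     hts.trans (Finset.mem_filter.1 hs).2⟩

end FinSimpComplex

/-- The diameter of a set with respect to a distance function `d`, valued in `ℝ≥0∞`. -/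
noncomputable def diamOn {X : Type*} (d : X → X → ℝ) (S : Set X) : ℝ≥0∞ :=
  ⨆ x ∈ S, ⨆ y ∈ S, ENNReal.ofReal (d x y)

/-- `f` is an `ε`-embedding w.r.t. `d`: it is continuous and all its fibers have
`d`-diameter `< ε`. -/
def IsEpsEmbedding {X P : Type*} [TopologicalSpace X] [TopologicalSpace P]
    (d : X → X → ℝ) (ε : ℝ) (f : X → P) : Prop :=
  Continuous f ∧ ∀ p : P, diamOn d (f ⁻¹' {p}) < ENNReal.ofReal ε

/-- The `ε`-width dimension of `X` w.r.t. `d`: the minimal integer `n ≥ 0` such that there is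
an `ε`-embedding of `X` into some at most `n`-dimensional finite simplicial complex
(`⊤` if no such embedding exists). -/
noncomputable def widim (X : Type*) [TopologicalSpace X] (d : X → X → ℝ) (ε : ℝ) : ℝ≥0∞ :=
  sInf {r : ℝ≥0∞ | ∃ n : ℕ, (n : ℝ≥0∞) = r ∧
    ∃ (k : ℕ) (K : FinSimpComplex (Fin k)) (f : X → ↥K.space),
      K.dimLE n ∧ IsEpsEmbedding d ε f}

/-- The dynamical distance `d_N(x,y) = max_{0 ≤ n < N} d(Tⁿx, Tⁿy)`. -/
noncomputable def dynDist {X : Type*} (d : X → X → ℝ) (T : X → X) (N : ℕ) (x y : X) : ℝ :=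
  (Finset.range N).fold max 0 fun n => d (T^[n] x) (T^[n] y)

/-- The mean dimension `mdim(X,T) = lim_{ε→0} lim_{N→∞} widim_ε(X,d_N)/N`; the limit in `N`
exists and equals the infimum by subadditivity, and the limit in `ε` is the supremum
by monotonicity. -/
noncomputable def mdim (X : Type*) [TopologicalSpace X] (d : X → X → ℝ) (T : X → X) : ℝ≥0∞ :=
  ⨆ (ε : ℝ) (_ : 0 < ε), ⨅ (N : ℕ) (_ : 0 < N), widim X (dynDist d T N) ε / (N : ℝ≥0∞)

/-- The relative mean dimension of a factor map `π`:
`mdim(π,T) = lim_{ε→0} lim_{N→∞} (sup_y widim_ε(π⁻¹(y), d_N))/N`. -/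
noncomputable def mdimRel {X Y : Type*} [TopologicalSpace X] (d : X → X → ℝ)
    (T : X → X) (π : X → Y) : ℝ≥0∞ :=
  ⨆ (ε : ℝ) (_ : 0 < ε), ⨅ (N : ℕ) (_ : 0 < N),
    (⨆ y : Y, widim ↥(π ⁻¹' {y}) (fun a b => dynDist d T N a.1 b.1) ε) / (N : ℝ≥0∞)

/-- The upper mean dimension of a subset `A ⊆ X`:
`lim_{ε→0} limsup_{N→∞} widim_ε(A,d_N)/N`. -/
noncomputable def umdim {X : Type*} [TopologicalSpace X] (d : X → X → ℝ) (T : X → X)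
    (A : Set X) : ℝ≥0∞ :=
  ⨆ (ε : ℝ) (_ : 0 < ε),
    Filter.limsup (fun N : ℕ =>
      widim ↥A (fun a b => dynDist d T N a.1 b.1) ε / (N : ℝ≥0∞)) Filter.atTop

/-- The lower mean dimension of a subset `A ⊆ X`:
`lim_{ε→0} liminf_{N→∞} widim_ε(A,d_N)/N`. -/
noncomputable def lmdim {X : Type*} [TopologicalSpace X] (d : X → X → ℝ) (T : X → X)
    (A : Set X) : ℝ≥0∞ :=
  ⨆ (ε : ℝ) (_ : 0 < ε),
    Filter.liminf (fun N : ℕ =>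
      widim ↥A (fun a b => dynDist d T N a.1 b.1) ε / (N : ℝ≥0∞)) Filter.atTop

/-- A factor map between dynamical systems: a continuous equivariant surjection. -/
structure IsFactorMap {X Y : Type*} [TopologicalSpace X] [TopologicalSpace Y]
    (T : X → X) (S : Y → Y) (π : X → Y) : Prop where
  continuous : Continuous π
  surjective : Function.Surjective π
  equivariant : ∀ x, π (T x) = S (π x)

/-- The orbit capacity `ocap(A) = lim_{N→∞} (1/N) sup_x Σ_{n<N} 1_A(Tⁿx)`; the limit exists
and equals the infimum by subadditivity. -/
noncomputable def ocap {X : Type*} (T : X → X) (A : Set X) : ℝ≥0∞ :=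
  ⨅ (N : ℕ) (_ : 0 < N),
    (⨆ x : X, ∑ n ∈ Finset.range N, A.indicator (fun _ => (1 : ℝ≥0∞)) (T^[n] x)) / (N : ℝ≥0∞)

/-- The small boundary property. -/
def SmallBoundaryProperty {Y : Type*} [TopologicalSpace Y] (S : Y → Y) : Prop :=
  ∀ y : Y, ∀ U : Set Y, IsOpen U → y ∈ U →
    ∃ V : Set Y, IsOpen V ∧ y ∈ V ∧ V ⊆ U ∧ ocap S (frontier V) = 0

/-- `d` is a metric on `X` compatible with the given topology. -/
def IsCompatibleMetric {X : Type*} [t : TopologicalSpace X] (d : X → X → ℝ) : Prop :=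
  ∃ m : MetricSpace X,
    m.toPseudoMetricSpace.toUniformSpace.toTopologicalSpace = t ∧
    ∀ x y, @dist X m.toPseudoMetricSpace.toDist x y = d x y

/-!
The fibre of `π₁ × π₂` over `(y₁, y₂)` is the product of the fibres, and its `d_N` is the maximum
of the two `d_N`'s. Given `ε`-embeddings `fᵢ` of the factors into complexes `Kᵢ`, send a point
to the monotone coupling of the barycentric coordinates `f₁ x₁` and `f₂ x₂` (overlay the two
partitions of `[0, 1]` they define). Its support is a chain of vertex pairs, so this is an
`ε`-embedding into the staircase triangulation of `K₁ × K₂`, of dimension `dim K₁ + dim K₂`;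
and it is injective because the marginals give back `f₁ x₁` and `f₂ x₂`. Hence
`widim_ε` of the product fibre is at most the sum of the fibre widths. These widths are
subadditive in `N`, so comparing both sides at time `N * M` gives the inequality of the limits.
-/

open Finset

section MonotoneCoupling

variable {k k₁ k₂ : ℕ}

noncomputable def cumSum (x : Fin k → ℝ) (m : ℕ) : ℝ :=
  ∑ i ∈ range m, if h : i < k then x ⟨i, h⟩ else 0

lemma cumSum_zero (x : Fin k → ℝ) : cumSum x 0 = 0 := by
  simp [cumSum]

lemma cumSum_succ (x : Fin k → ℝ) (v : Fin k) : cumSum x (v + 1) = cumSum x v + x v := by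
  simp [cumSum, sum_range_succ]

lemma cumSum_mono {x : Fin k → ℝ} (hx : ∀ v, 0 ≤ x v) : Monotone (cumSum x) :=
  monotone_nat_of_le_succ fun m => by
    rw [cumSum, cumSum, sum_range_succ, le_add_iff_nonneg_right]
    split_ifs
    exacts [hx _, le_rfl]

lemma cumSum_card (x : Fin k → ℝ) : cumSum x k = ∑ v, x v := by
  rw [cumSum, ← Fin.sum_univ_eq_sum_range (fun i => if h : i < k then x ⟨i, h⟩ else 0)]
  simp

lemma continuous_cumSum (m : ℕ) : Continuous fun x : Fin k → ℝ => cumSum x m := by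
  refine continuous_finsetSum _ fun i _ => ?_
  split_ifs <;> fun_prop

/-- The monotone coupling of `x` and `y`: the length of the intersection of the `v`-th interval
of the partition of `[0, 1]` cut out by the cumulative sums of `x` with the `w`-th interval of
the one cut out by those of `y`. -/
noncomputable def monotoneCoupling (x : Fin k₁ → ℝ) (y : Fin k₂ → ℝ) (p : Fin k₁ × Fin k₂) : ℝ :=
  max 0 (min (cumSum x (p.1 + 1)) (cumSum y (p.2 + 1)) - max (cumSum x p.1) (cumSum y p.2))

lemma monotoneCoupling_nonneg (x : Fin k₁ → ℝ) (y : Fin k₂ → ℝ) (p : Fin k₁ × Fin k₂) :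
    0 ≤ monotoneCoupling x y p :=
  le_max_left _ _

lemma monotoneCoupling_swap (x : Fin k₁ → ℝ) (y : Fin k₂ → ℝ) (p : Fin k₁ × Fin k₂) :
    monotoneCoupling y x p.swap = monotoneCoupling x y p := by
  simp [monotoneCoupling, min_comm, max_comm]

lemma continuous_monotoneCoupling (p : Fin k₁ × Fin k₂) :
    Continuous fun q : (Fin k₁ → ℝ) × (Fin k₂ → ℝ) => monotoneCoupling q.1 q.2 p := by
  unfold monotoneCoupling
  have := continuous_cumSum (k := k₁)
  have := continuous_cumSum (k := k₂)
  fun_prop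

variable {x : Fin k₁ → ℝ} {y : Fin k₂ → ℝ}

/-- The `x`-interval `[a, b]` is cut into the pieces `[a, b] ∩ [cumSum y w, cumSum y (w + 1)]`,
so the sum telescopes. -/
lemma sum_monotoneCoupling_fst (hx : ∀ v, 0 ≤ x v) (hy : ∀ w, 0 ≤ y w) (hx1 : ∑ v, x v = 1)
    (hy1 : ∑ w, y w = 1) (v : Fin k₁) : ∑ w, monotoneCoupling x y (v, w) = x v := by
  set a := cumSum x v
  set b := cumSum x (v + 1)
  have hab : a ≤ b := cumSum_mono hx (Nat.le_succ _)
  have hb1 : b ≤ 1 := hx1 ▸ cumSum_card x ▸ cumSum_mono hx v.isLt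
  have ha0 : 0 ≤ a := cumSum_zero x ▸ cumSum_mono hx (Nat.zero_le _)
  have hpiece (w : ℕ) : max 0 (min b (cumSum y (w + 1)) - max a (cumSum y w)) =
      min b (max a (cumSum y (w + 1))) - min b (max a (cumSum y w)) := by
    have := cumSum_mono hy (Nat.le_succ w)
    simp only [max_def, min_def]
    split_ifs <;> linarith
  calc ∑ w, monotoneCoupling x y (v, w)
      = ∑ w ∈ range k₂, max 0 (min b (cumSum y (w + 1)) - max a (cumSum y w)) :=
        Fin.sum_univ_eq_sum_range (fun w => max 0 (min b (cumSum y (w + 1)) - max a (cumSum y w))) _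
    _ = ∑ w ∈ range k₂, (min b (max a (cumSum y (w + 1))) - min b (max a (cumSum y w))) :=
        sum_congr rfl fun w _ => hpiece w
    _ = x v := by
        rw [sum_range_sub (fun w => min b (max a (cumSum y w))), cumSum_zero, cumSum_card, hy1,
          max_eq_right (hab.trans hb1), min_eq_left hb1, max_eq_left ha0, min_eq_right hab]
        linarith [cumSum_succ x v]

lemma sum_monotoneCoupling_snd (hx : ∀ v, 0 ≤ x v) (hy : ∀ w, 0 ≤ y w) (hx1 : ∑ v, x v = 1)
    (hy1 : ∑ w, y w = 1) (w : Fin k₂) : ∑ v, monotoneCoupling x y (v, w) = y w := by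
  simp_rw [← monotoneCoupling_swap x y]
  exact sum_monotoneCoupling_fst hy hx hy1 hx1 w

/-- A cell of positive mass is a nonempty interval, lying inside both the `x`-interval and the
`y`-interval of its vertices; so two such cells are ordered the same way in both coordinates. -/
lemma isChain_support_monotoneCoupling (hx : ∀ v, 0 ≤ x v) (hy : ∀ w, 0 ≤ y w) :
    IsChain (· ≤ ·) {p | monotoneCoupling x y p ≠ 0} := by
  have hpos {p : Fin k₁ × Fin k₂} (hp : monotoneCoupling x y p ≠ 0) :
      max (cumSum x p.1) (cumSum y p.2) < min (cumSum x (p.1 + 1)) (cumSum y (p.2 + 1)) := by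
    by_contra! h
    exact hp (max_eq_left (sub_nonpos.2 h))
  have key {p q : Fin k₁ × Fin k₂} (hp : monotoneCoupling x y p ≠ 0)
      (hq : monotoneCoupling x y q ≠ 0) (hlt : p.1 < q.1) : p.2 ≤ q.2 := by
    by_contra! hgt
    have h1 := cumSum_mono hx (Nat.succ_le_of_lt hlt)
    have h2 := cumSum_mono hy (Nat.succ_le_of_lt hgt)
    have h3 := lt_min_iff.1 (max_lt_iff.1 (hpos hp)).2
    have h4 := lt_min_iff.1 (max_lt_iff.1 (hpos hq)).1
    linarith [h3.1, h4.2]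
  intro p hp q hq _
  simp only [Prod.le_def]
  rcases lt_trichotomy p.1 q.1 with h | h | h
  · exact Or.inl ⟨h.le, key hp hq h⟩
  · rcases le_total p.2 q.2 with h2 | h2
    · exact Or.inl ⟨h.le, h2⟩
    · exact Or.inr ⟨h.ge, h2⟩
  · exact Or.inr ⟨h.le, key hq hp h⟩

end MonotoneCoupling

/-- Going up a chain in `α × β`, every step increases a coordinate. -/
theorem IsChain.card_add_one_le_card_image_fst_add_card_image_snd {α β : Type*} [LinearOrder α]
    [LinearOrder β] {t : Finset (α × β)} (hne : t.Nonempty)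
    (ht : IsChain (· ≤ ·) (t : Set (α × β))) :
    #t + 1 ≤ #(t.image Prod.fst) + #(t.image Prod.snd) := by
  induction t using Finset.induction_on_max_value (fun p : α × β => toLex p) with
  | empty => exact absurd hne Finset.not_nonempty_empty
  | insert a s has hmax ih =>
    rcases s.eq_empty_or_nonempty with rfl | hs
    · simp
    rw [coe_insert] at ht
    have hle (q) (hq : q ∈ s) : q ≤ a := by
      rcases ht.total (Set.mem_insert_of_mem _ hq) (Set.mem_insert _ _) with h | h
      · exact h
      · obtain ⟨h1, h2⟩ := Prod.le_def.1 h
        rcases Prod.Lex.toLex_le_toLex.1 (hmax q hq) with h3 | ⟨h3, h4⟩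
        · exact (h1.not_gt h3).elim
        · exact absurd (Prod.ext h3 (le_antisymm h4 h2) ▸ hq) has
    have hnew : a.1 ∉ s.image Prod.fst ∨ a.2 ∉ s.image Prod.snd := by
      by_contra! h
      obtain ⟨r, hr, hr1⟩ := mem_image.1 h.1
      obtain ⟨r', hr', hr2⟩ := mem_image.1 h.2
      have hr2lt : r.2 < a.2 := lt_of_le_of_ne (Prod.le_def.1 (hle r hr)).2
        fun h2 => ne_of_mem_of_not_mem hr has (Prod.ext hr1 h2)
      have hr1lt : r'.1 < a.1 := lt_of_le_of_ne (Prod.le_def.1 (hle r' hr')).1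
        fun h1 => ne_of_mem_of_not_mem hr' has (Prod.ext h1 hr2)
      rcases (ht.mono (Set.subset_insert _ _)).total hr hr' with h | h <;>
        obtain ⟨h1, h2⟩ := Prod.le_def.1 h <;> order
    have ih := ih hs (ht.mono (Set.subset_insert _ _))
    rw [card_insert_of_notMem has, image_insert, image_insert]
    have h1 := card_le_card (subset_insert a.1 (s.image Prod.fst))
    have h2 := card_le_card (subset_insert a.2 (s.image Prod.snd))
    rcases hnew with h | h <;> rw [card_insert_of_notMem h] at * <;> omega

section EpsEmbedding

variable {X Z P Q : Type*} {d d' : X → X → ℝ} {ε : ℝ}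

lemma diamOn_le_iff {S : Set X} {c : ℝ≥0∞} :
    diamOn d S ≤ c ↔ ∀ x ∈ S, ∀ y ∈ S, ENNReal.ofReal (d x y) ≤ c := by
  simp [diamOn]

lemma ofReal_le_diamOn {S : Set X} {x y : X} (hx : x ∈ S) (hy : y ∈ S) :
    ENNReal.ofReal (d x y) ≤ diamOn d S :=
  diamOn_le_iff.1 le_rfl x hx y hy

lemma diamOn_mono {S S' : Set X} (h : S ⊆ S') : diamOn d S ≤ diamOn d S' :=
  diamOn_le_iff.2 fun _ hx _ hy => ofReal_le_diamOn (h hx) (h hy)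

lemma diamOn_max_le (S : Set X) :
    diamOn (fun a b => max (d a b) (d' a b)) S ≤ max (diamOn d S) (diamOn d' S) :=
  diamOn_le_iff.2 fun _ hx _ hy => by
    rw [ENNReal.ofReal_max]
    exact max_le_max (ofReal_le_diamOn hx hy) (ofReal_le_diamOn hx hy)

variable [TopologicalSpace X] [TopologicalSpace P] [TopologicalSpace Q]

lemma isEpsEmbedding_iff_diamOn_fiber_lt (hε : 0 < ε) {f : X → P} :
    IsEpsEmbedding d ε f ↔
      Continuous f ∧ ∀ x, diamOn d (f ⁻¹' {f x}) < ENNReal.ofReal ε := by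
  refine and_congr_right fun _ => ⟨fun h x => h (f x), fun h p => ?_⟩
  rcases (f ⁻¹' {p}).eq_empty_or_nonempty with he | ⟨x, rfl⟩
  · simpa [he, diamOn] using hε
  · exact h x

lemma IsEpsEmbedding.prodMk {f₁ : X → P} {f₂ : X → Q} (h₁ : IsEpsEmbedding d ε f₁)
    (h₂ : IsEpsEmbedding d' ε f₂) :
    IsEpsEmbedding (fun a b => max (d a b) (d' a b)) ε fun x => (f₁ x, f₂ x) := by
  refine ⟨h₁.1.prodMk h₂.1, fun p => (diamOn_max_le _).trans_lt (max_lt ?_ ?_)⟩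
  · exact (diamOn_mono fun x hx => congrArg Prod.fst hx).trans_lt (h₁.2 p.1)
  · exact (diamOn_mono fun x hx => congrArg Prod.snd hx).trans_lt (h₂.2 p.2)

lemma IsEpsEmbedding.injective_comp (hε : 0 < ε) {f : X → P} {g : P → Q}
    (hf : IsEpsEmbedding d ε f) (hg : Continuous g) (hg' : Function.Injective g) :
    IsEpsEmbedding d ε (g ∘ f) := by
  rw [isEpsEmbedding_iff_diamOn_fiber_lt hε] at hf ⊢
  refine ⟨hg.comp hf.1, fun x => ?_⟩
  have hfiber : g ⁻¹' {g (f x)} = {f x} := by ext; simp [hg'.eq_iff]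
  rw [Set.preimage_comp, Function.comp_apply, hfiber]
  exact hf.2 x

lemma IsEpsEmbedding.comp_of_le [TopologicalSpace Z] {dZ : Z → Z → ℝ} {f : Z → P} {g : X → Z}
    (hf : IsEpsEmbedding dZ ε f) (hg : Continuous g) (hd : ∀ a b, d a b ≤ dZ (g a) (g b)) :
    IsEpsEmbedding d ε (f ∘ g) :=
  ⟨hf.1.comp hg, fun p => lt_of_le_of_lt (diamOn_le_iff.2 fun _ ha _ hb =>
    (ENNReal.ofReal_le_ofReal (hd _ _)).trans (ofReal_le_diamOn ha hb)) (hf.2 p)⟩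

end EpsEmbedding

namespace FinSimpComplex

variable {V W : Type}

def relabel (K : FinSimpComplex V) (e : V ≃ W) : FinSimpComplex W where
  faces := K.faces.map e.finsetCongr.toEmbedding
  nonempty_of_mem s hs := by
    rw [mem_map_equiv] at hs
    simpa using K.nonempty_of_mem _ hs
  down_closed s hs t hts htne := by
    rw [mem_map_equiv] at hs ⊢
    exact K.down_closed _ hs _ (map_subset_map.2 hts) (htne.map)

lemma mem_relabel_faces {K : FinSimpComplex V} {e : V ≃ W} {s : Finset W} :
    s ∈ (K.relabel e).faces ↔ s.map e.symm.toEmbedding ∈ K.faces :=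
  mem_map_equiv

lemma dimLE_relabel {K : FinSimpComplex V} {n : ℕ} (hK : K.dimLE n) (e : V ≃ W) :
    (K.relabel e).dimLE n := fun s hs => by
  simpa using hK _ (mem_relabel_faces.1 hs)

variable [Fintype V] [Fintype W]

def relabelMap (K : FinSimpComplex V) (e : V ≃ W) : K.space → (K.relabel e).space :=
  fun x => ⟨x.1 ∘ e.symm, by
    obtain ⟨hx0, hx1, s, hs, hsupp⟩ := x.2
    refine ⟨fun w => hx0 _, (e.symm.sum_comp _).trans hx1, s.map e.toEmbedding, ?_, fun w hw => ?_⟩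
    · rw [mem_relabel_faces, map_map]
      convert hs
      ext
      simp
    · simpa using hsupp _ hw⟩

lemma continuous_relabelMap (K : FinSimpComplex V) (e : V ≃ W) :
    Continuous (K.relabelMap e) :=
  ((Pi.continuous_precomp e.symm).comp continuous_subtype_val).subtype_mk _

lemma relabelMap_injective (K : FinSimpComplex V) (e : V ≃ W) :
    Function.Injective (K.relabelMap e) := fun _ _ h =>
  Subtype.ext <| (e.symm.surjective.injective_comp_right) (congrArg Subtype.val h)

variable [LinearOrder V] [LinearOrder W]

open scoped Classical in
/-- The staircase triangulation of `|K₁| × |K₂|`. -/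
noncomputable def prod (K₁ : FinSimpComplex V) (K₂ : FinSimpComplex W) :
    FinSimpComplex (V × W) where
  faces := univ.powerset.filter fun t => t.Nonempty ∧ IsChain (· ≤ ·) (t : Set (V × W)) ∧
    t.image Prod.fst ∈ K₁.faces ∧ t.image Prod.snd ∈ K₂.faces
  nonempty_of_mem _ hs := (mem_filter.1 hs).2.1
  down_closed s hs t hts htne := by
    obtain ⟨-, -, hch, h₁, h₂⟩ := mem_filter.1 hs
    exact mem_filter.2 ⟨mem_powerset.2 (subset_univ t), htne, hch.mono (coe_subset.2 hts),
      K₁.down_closed _ h₁ _ (image_subset_image hts) (htne.image _),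
      K₂.down_closed _ h₂ _ (image_subset_image hts) (htne.image _)⟩

lemma mem_prod_faces {K₁ : FinSimpComplex V} {K₂ : FinSimpComplex W}
    {t : Finset (V × W)} :
    t ∈ (K₁.prod K₂).faces ↔ t.Nonempty ∧ IsChain (· ≤ ·) (t : Set (V × W)) ∧
      t.image Prod.fst ∈ K₁.faces ∧ t.image Prod.snd ∈ K₂.faces := by
  classical
  simp [prod]

lemma dimLE_prod {K₁ : FinSimpComplex V} {K₂ : FinSimpComplex W} {n₁ n₂ : ℕ}
    (h₁ : K₁.dimLE n₁) (h₂ : K₂.dimLE n₂) : (K₁.prod K₂).dimLE (n₁ + n₂) := fun s hs => by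
  obtain ⟨hne, hch, hs₁, hs₂⟩ := mem_prod_faces.1 hs
  have := IsChain.card_add_one_le_card_image_fst_add_card_image_snd hne hch
  have := h₁ _ hs₁
  have := h₂ _ hs₂
  omega

end FinSimpComplex

section CouplingMap

lemma image_fst_filter_ne_zero {V W : Type*} [Fintype V] [Fintype W] [DecidableEq V]
    {c : V × W → ℝ} (hc : ∀ p, 0 ≤ c p) {x : V → ℝ} (hx : ∀ v, ∑ w, c (v, w) = x v) :
    (univ.filter fun p => c p ≠ 0).image Prod.fst = univ.filter fun v => x v ≠ 0 := by
  ext v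
  simp only [mem_image, mem_filter, mem_univ, true_and, Prod.exists, exists_and_right,
    exists_eq_right]
  rw [← hx v, Ne, sum_eq_zero_iff_of_nonneg fun w _ => hc _]
  simp

lemma image_snd_filter_ne_zero {V W : Type*} [Fintype V] [Fintype W] [DecidableEq W]
    {c : V × W → ℝ} (hc : ∀ p, 0 ≤ c p) {y : W → ℝ} (hy : ∀ w, ∑ v, c (v, w) = y w) :
    (univ.filter fun p => c p ≠ 0).image Prod.snd = univ.filter fun w => y w ≠ 0 := by
  ext w
  simp only [mem_image, mem_filter, mem_univ, true_and, Prod.exists, exists_eq_right]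
  rw [← hy w, Ne, sum_eq_zero_iff_of_nonneg fun v _ => hc _]
  simp

variable {k₁ k₂ : ℕ} {K₁ : FinSimpComplex (Fin k₁)} {K₂ : FinSimpComplex (Fin k₂)}

lemma monotoneCoupling_mem_space {x : Fin k₁ → ℝ} {y : Fin k₂ → ℝ} (hx : x ∈ K₁.space)
    (hy : y ∈ K₂.space) : monotoneCoupling x y ∈ (K₁.prod K₂).space := by
  classical
  obtain ⟨hx0, hx1, s₁, hs₁, hsupp₁⟩ := hx
  obtain ⟨hy0, hy1, s₂, hs₂, hsupp₂⟩ := hy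
  have hfst := sum_monotoneCoupling_fst hx0 hy0 hx1 hy1
  have hsnd := sum_monotoneCoupling_snd hx0 hy0 hx1 hy1
  have hsum : ∑ p, monotoneCoupling x y p = 1 := by
    rw [Fintype.sum_prod_type]
    simp_rw [hfst]
    exact hx1
  set t := univ.filter fun p => monotoneCoupling x y p ≠ 0
  have ht : t.Nonempty := by
    obtain ⟨p, -, hp⟩ := exists_ne_zero_of_sum_ne_zero (hsum ▸ one_ne_zero)
    exact ⟨p, mem_filter.2 ⟨mem_univ _, hp⟩⟩
  refine ⟨monotoneCoupling_nonneg x y, hsum, t, FinSimpComplex.mem_prod_faces.2 ⟨ht, ?_, ?_, ?_⟩,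
    fun p hp => mem_filter.2 ⟨mem_univ _, hp⟩⟩
  · exact (isChain_support_monotoneCoupling hx0 hy0).mono fun p hp => (mem_filter.1 hp).2
  · refine K₁.down_closed s₁ hs₁ _ ?_ (ht.image _)
    rw [image_fst_filter_ne_zero (monotoneCoupling_nonneg x y) hfst]
    exact fun v hv => hsupp₁ v (mem_filter.1 hv).2
  · refine K₂.down_closed s₂ hs₂ _ ?_ (ht.image _)
    rw [image_snd_filter_ne_zero (monotoneCoupling_nonneg x y) hsnd]
    exact fun w hw => hsupp₂ w (mem_filter.1 hw).2

noncomputable def couplingMap (K₁ : FinSimpComplex (Fin k₁)) (K₂ : FinSimpComplex (Fin k₂)) :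
    K₁.space × K₂.space → (K₁.prod K₂).space :=
  fun q => ⟨monotoneCoupling q.1 q.2, monotoneCoupling_mem_space q.1.2 q.2.2⟩

lemma continuous_couplingMap : Continuous (couplingMap K₁ K₂) :=
  (continuous_pi fun p => (continuous_monotoneCoupling p).comp
    (continuous_subtype_val.prodMap continuous_subtype_val)).subtype_mk _

/-- A probability vector is recovered from the monotone coupling as its marginal. -/
lemma couplingMap_injective : Function.Injective (couplingMap K₁ K₂) := by
  intro q q' h
  have hc : monotoneCoupling q.1.1 q.2.1 = monotoneCoupling q'.1.1 q'.2.1 := congrArg Subtype.val h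
  have hfst (r : K₁.space × K₂.space) :=
    sum_monotoneCoupling_fst r.1.2.1 r.2.2.1 r.1.2.2.1 r.2.2.2.1
  have hsnd (r : K₁.space × K₂.space) :=
    sum_monotoneCoupling_snd r.1.2.1 r.2.2.1 r.1.2.2.1 r.2.2.2.1
  refine Prod.ext (Subtype.ext (funext fun v => ?_)) (Subtype.ext (funext fun w => ?_))
  · rw [← hfst q, ← hfst q', hc]
  · rw [← hsnd q, ← hsnd q', hc]

end CouplingMap

section Widim

variable {X Z : Type*} [TopologicalSpace X] [TopologicalSpace Z] {ε : ℝ}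

lemma widim_le_of_isEpsEmbedding {d : X → X → ℝ} (hε : 0 < ε) {V : Type} [Fintype V]
    {K : FinSimpComplex V} {n : ℕ} (hK : K.dimLE n)
    {f : X → K.space} (hf : IsEpsEmbedding d ε f) : widim X d ε ≤ n := by
  let e := Fintype.equivFin V
  exact sInf_le ⟨n, rfl, _, K.relabel e, _, K.dimLE_relabel hK e,
    hf.injective_comp hε (K.continuous_relabelMap e) (K.relabelMap_injective e)⟩

lemma widim_max_le_add (d d' : X → X → ℝ) (hε : 0 < ε) :
    widim X (fun a b => max (d a b) (d' a b)) ε ≤ widim X d ε + widim X d' ε := by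
  unfold widim
  rw [ENNReal.sInf_add]
  refine le_iInf₂ fun _ ⟨n₁, hn₁, k₁, K₁, f₁, hK₁, hf₁⟩ => ?_
  rw [ENNReal.add_sInf]
  refine le_iInf₂ fun _ ⟨n₂, hn₂, k₂, K₂, f₂, hK₂, hf₂⟩ => ?_
  rw [← hn₁, ← hn₂, ← Nat.cast_add]
  exact widim_le_of_isEpsEmbedding hε (FinSimpComplex.dimLE_prod hK₁ hK₂)
    ((hf₁.prodMk hf₂).injective_comp hε continuous_couplingMap couplingMap_injective)

lemma widim_le_of_map {dX : X → X → ℝ} {dZ : Z → Z → ℝ} (g : X → Z) (hg : Continuous g)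
    (hd : ∀ a b, dX a b ≤ dZ (g a) (g b)) : widim X dX ε ≤ widim Z dZ ε :=
  sInf_le_sInf fun _ ⟨n, hn, k, K, f, hK, hf⟩ => ⟨n, hn, k, K, f ∘ g, hK, hf.comp_of_le hg hd⟩

end Widim

lemma apply_mul_le_nsmul_of_subadditive {α : Type*} [AddCommMonoid α] [PartialOrder α]
    [IsOrderedAddMonoid α] {a : ℕ → α} (ha : ∀ N M, a (N + M) ≤ a N + a M) (N : ℕ) {M : ℕ}
    (hM : 0 < M) : a (N * M) ≤ M • a N := by
  induction M, hM using Nat.le_induction with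
  | base => simp
  | succ M _ ih =>
    rw [mul_add_one, succ_nsmul]
    exact (ha _ _).trans (add_le_add_left ih _)

lemma ENNReal.iInf_div_le_add_of_subadditive {a b c : ℕ → ℝ≥0∞}
    (ha : ∀ N M, a (N + M) ≤ a N + a M) (hb : ∀ N M, b (N + M) ≤ b N + b M)
    (hc : ∀ L, c L ≤ a L + b L) :
    ⨅ (L : ℕ) (_ : 0 < L), c L / L ≤
      (⨅ (N : ℕ) (_ : 0 < N), a N / N) + ⨅ (M : ℕ) (_ : 0 < M), b M / M := by
  simp_rw [ENNReal.iInf_add, ENNReal.add_iInf]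
  refine le_iInf₂ fun N hN => le_iInf₂ fun M hM => ?_
  have hN' : (N : ℝ≥0∞) ≠ 0 := by exact_mod_cast hN.ne'
  have hM' : (M : ℝ≥0∞) ≠ 0 := by exact_mod_cast hM.ne'
  calc ⨅ (L : ℕ) (_ : 0 < L), c L / L
      ≤ c (N * M) / (N * M : ℕ) := iInf₂_le _ (Nat.mul_pos hN hM)
    _ ≤ (M * a N + N * b M) / (N * M : ℕ) := by
        gcongr
        refine (hc _).trans (add_le_add ?_ ?_)
        · simpa using apply_mul_le_nsmul_of_subadditive ha N hM
        · simpa [mul_comm N M] using apply_mul_le_nsmul_of_subadditive hb M hN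
    _ = a N / N + b M / M := by
        rw [ENNReal.add_div, Nat.cast_mul, mul_comm (N : ℝ≥0∞),
          ENNReal.mul_div_mul_left _ _ hM' (ENNReal.natCast_ne_top M), mul_comm (M : ℝ≥0∞),
          ENNReal.mul_div_mul_left _ _ hN' (ENNReal.natCast_ne_top N)]

lemma dynDist_add {X : Type*} (d : X → X → ℝ) (T : X → X) (N M : ℕ) (x y : X) :
    dynDist d T (N + M) x y = max (dynDist d T N x y) (dynDist d T M (T^[N] x) (T^[N] y)) := by
  refine eq_of_forall_ge_iff fun c => ?_
  simp only [dynDist, fold_max_le, max_le_iff, range_add, forall_mem_union, forall_mem_map,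
    addLeftEmbedding_apply]
  simp only [add_comm N, Function.iterate_add_apply]
  tauto

lemma dynDist_prodMap {X₁ X₂ : Type*} [PseudoMetricSpace X₁] [PseudoMetricSpace X₂]
    (T₁ : X₁ → X₁) (T₂ : X₂ → X₂) (N : ℕ) (p q : X₁ × X₂) :
    dynDist dist (Prod.map T₁ T₂) N p q =
      max (dynDist dist T₁ N p.1 q.1) (dynDist dist T₂ N p.2 q.2) := by
  refine eq_of_forall_ge_iff fun c => ?_
  simp only [dynDist, fold_max_le, max_le_iff, Prod.map_iterate, Prod.dist_eq, Prod.map_fst,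
    Prod.map_snd]
  grind

noncomputable def fiberWidim {X Y : Type*} [TopologicalSpace X] (d : X → X → ℝ) (T : X → X)
    (π : X → Y) (N : ℕ) (ε : ℝ) : ℝ≥0∞ :=
  ⨆ y : Y, widim ↥(π ⁻¹' {y}) (fun a b => dynDist d T N a.1 b.1) ε

lemma mdimRel_eq_iSup_iInf_fiberWidim {X Y : Type*} [TopologicalSpace X] (d : X → X → ℝ)
    (T : X → X) (π : X → Y) :
    mdimRel d T π = ⨆ (ε : ℝ) (_ : 0 < ε), ⨅ (N : ℕ) (_ : 0 < N), fiberWidim d T π N ε / N :=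
  rfl

/-- `Tᴺ` maps the fibre over `y` into the fibre over `Sᴺ y`. -/
lemma fiberWidim_add_le {X Y : Type*} [TopologicalSpace X] (d : X → X → ℝ) {T : X → X}
    (hT : Continuous T) {S : Y → Y} {π : X → Y} (hπ : Function.Semiconj π T S) {ε : ℝ}
    (hε : 0 < ε) (N M : ℕ) :
    fiberWidim d T π (N + M) ε ≤ fiberWidim d T π N ε + fiberWidim d T π M ε := by
  refine iSup_le fun y => ?_
  simp_rw [dynDist_add]
  refine (widim_max_le_add _ _ hε).trans (add_le_add (le_iSup_of_le y le_rfl)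
    (le_iSup_of_le (S^[N] y) (widim_le_of_map (fun a => ⟨T^[N] a.1, ?_⟩) ?_ fun _ _ => le_rfl)))
  · exact (hπ.iterate_right N a.1).trans (congrArg S^[N] a.2)
  · exact ((hT.iterate N).comp continuous_subtype_val).subtype_mk _

lemma fiberWidim_prodMap_le {X₁ X₂ Y₁ Y₂ : Type*} [PseudoMetricSpace X₁] [PseudoMetricSpace X₂]
    (T₁ : X₁ → X₁) (T₂ : X₂ → X₂) (π₁ : X₁ → Y₁) (π₂ : X₂ → Y₂) {ε : ℝ} (hε : 0 < ε) (N : ℕ) :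
    fiberWidim dist (Prod.map T₁ T₂) (Prod.map π₁ π₂) N ε ≤
      fiberWidim dist T₁ π₁ N ε + fiberWidim dist T₂ π₂ N ε := by
  refine iSup_le fun y => ?_
  simp_rw [dynDist_prodMap]
  refine (widim_max_le_add _ _ hε).trans (add_le_add
    (le_iSup_of_le y.1 (widim_le_of_map (fun a => ⟨a.1.1, ?_⟩) ?_ fun _ _ => le_rfl))
    (le_iSup_of_le y.2 (widim_le_of_map (fun a => ⟨a.1.2, ?_⟩) ?_ fun _ _ => le_rfl)))
  · exact congrArg Prod.fst a.2
  · exact (continuous_fst.comp continuous_subtype_val).subtype_mk _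
  · exact congrArg Prod.snd a.2
  · exact (continuous_snd.comp continuous_subtype_val).subtype_mk _

theorem mdimRel_prod_le_add_general
    {X₁ X₂ Y₁ Y₂ : Type} [MetricSpace X₁] [MetricSpace X₂]
    [MetricSpace Y₁] [MetricSpace Y₂]
    (T₁ : X₁ ≃ₜ X₁) (T₂ : X₂ ≃ₜ X₂) (S₁ : Y₁ ≃ₜ Y₁) (S₂ : Y₂ ≃ₜ Y₂)
    (π₁ : X₁ → Y₁) (π₂ : X₂ → Y₂)
    (h₁ : IsFactorMap ⇑T₁ ⇑S₁ π₁) (h₂ : IsFactorMap ⇑T₂ ⇑S₂ π₂) :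
    mdimRel dist ⇑(T₁.prodCongr T₂) (fun p : X₁ × X₂ => (π₁ p.1, π₂ p.2)) ≤
      mdimRel dist ⇑T₁ π₁ + mdimRel dist ⇑T₂ π₂ := by
  simp only [mdimRel_eq_iSup_iInf_fiberWidim, Homeomorph.coe_prodCongr]
  refine iSup₂_le fun ε hε => le_trans ?_ (add_le_add (le_iSup₂ ε hε) (le_iSup₂ ε hε))
  exact ENNReal.iInf_div_le_add_of_subadditive
    (fiberWidim_add_le dist T₁.continuous h₁.equivariant hε)
    (fiberWidim_add_le dist T₂.continuous h₂.equivariant hε)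
    (fiberWidim_prodMap_le T₁ T₂ π₁ π₂ hε)

/-- **Lemma 4.1 (first inequality).** For factor maps `π_i : (X_i,T_i) → (Y_i,S_i)`
(`i = 1,2`), the product factor map
`π₁ × π₂ : (X₁ × X₂, T₁ × T₂) → (Y₁ × Y₂, S₁ × S₂)` satisfies
`mdim(π₁ × π₂, T₁ × T₂) ≤ mdim(π₁,T₁) + mdim(π₂,T₂)`.
(The product carries the max metric, which is the metric of `X₁ × X₂`.) -/
theorem mdimRel_prod_le_add
    {X₁ X₂ Y₁ Y₂ : Type} [MetricSpace X₁] [CompactSpace X₁] [MetricSpace X₂] [CompactSpace X₂]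
    [MetricSpace Y₁] [CompactSpace Y₁] [MetricSpace Y₂] [CompactSpace Y₂]
    (T₁ : X₁ ≃ₜ X₁) (T₂ : X₂ ≃ₜ X₂) (S₁ : Y₁ ≃ₜ Y₁) (S₂ : Y₂ ≃ₜ Y₂)
    (π₁ : X₁ → Y₁) (π₂ : X₂ → Y₂)
    (h₁ : IsFactorMap ⇑T₁ ⇑S₁ π₁) (h₂ : IsFactorMap ⇑T₂ ⇑S₂ π₂) :
    mdimRel dist ⇑(T₁.prodCongr T₂) (fun p : X₁ × X₂ => (π₁ p.1, π₂ p.2)) ≤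
      mdimRel dist ⇑T₁ π₁ + mdimRel dist ⇑T₂ π₂ :=
  mdimRel_prod_le_add_general T₁ T₂ S₁ S₂ π₁ π₂ h₁ h₂
end

section
/- Let (X,T) be a dynamical system and E ⊂ X a closed subset. For any positive number δ there exists an open neighborhood U of E such that ocap(U) < ocap(E) + δ. -/
open scoped ENNReal

/-! Choose `N` with `(1/N) sup_x #{n < N | Tⁿx ∈ E} < ocap E + δ`. For each set `S` of times
below `N`, if no orbit visits `E` at all times of `S`, then by compactness no orbit visits a
small enough thickening `U` of `E` at all times of `S` either (the closed thickenings shrink to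
`E`). Taking the smallest such thickening over the finitely many `S`, every visit pattern of `U`
in the first `N` steps is contained in a visit pattern of `E`, so the `N`-th quotient for `U` is
at most the one for `E`. -/

open Metric Set Filter Topology

section Thickening

variable {X Y ι : Type*} [TopologicalSpace X] [CompactSpace X] [PseudoEMetricSpace Y]
  {f : ι → X → Y} {E : Set Y}

lemma exists_pos_iInter_preimage_cthickening_eq_empty (hf : ∀ i, Continuous (f i))
    (hE : IsClosed E) {S : Finset ι} (h : ⋂ i ∈ S, f i ⁻¹' E = ∅) :
    ∃ ε > 0, ⋂ i ∈ S, f i ⁻¹' cthickening ε E = ∅ := by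
  let t : Ioi (0 : ℝ) → Set X := fun ε => ⋂ i ∈ S, f i ⁻¹' cthickening ε E
  have ht_closed : ∀ ε, IsClosed (t ε) := fun ε =>
    isClosed_biInter fun i _ => isClosed_cthickening.preimage (hf i)
  have ht_mono : Monotone t := fun ε₁ ε₂ hε =>
    biInter_mono subset_rfl fun i _ => preimage_mono (cthickening_mono hε E)
  have ht_inter : univ ∩ ⋂ ε, t ε = ∅ := by
    rw [univ_inter, ← subset_empty_iff, ← h]
    refine fun x hx => mem_iInter₂.2 fun i hi => ?_
    rw [mem_preimage, ← hE.closure_eq, closure_eq_iInter_cthickening]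
    exact mem_iInter₂.2 fun ε hε => mem_iInter₂.1 (mem_iInter.1 hx ⟨ε, hε⟩) i hi
  have : Nonempty (Ioi (0 : ℝ)) := ⟨⟨1, mem_Ioi.2 one_pos⟩⟩
  obtain ⟨ε, hε⟩ := isCompact_univ.elim_directed_family_closed t ht_closed ht_inter
    ht_mono.directed_ge
  exact ⟨ε, ε.2, by simpa [t] using hε⟩

lemma eventually_nonempty_iInter_preimage_of_nonempty_thickening
    (hf : ∀ i, Continuous (f i)) (hE : IsClosed E) (S : Finset ι) :
    ∀ᶠ ε in 𝓝[>] (0 : ℝ), (⋂ i ∈ S, f i ⁻¹' thickening ε E).Nonempty →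
      (⋂ i ∈ S, f i ⁻¹' E).Nonempty := by
  rcases (⋂ i ∈ S, f i ⁻¹' E).eq_empty_or_nonempty with h | h
  · obtain ⟨ε, hε, hempty⟩ := exists_pos_iInter_preimage_cthickening_eq_empty hf hE h
    filter_upwards [Ioc_mem_nhdsGT hε] with ε' hε' hne
    refine ((hne.mono ?_).ne_empty hempty).elim
    exact biInter_mono subset_rfl fun i _ =>
      preimage_mono ((thickening_subset_cthickening ε' E).trans (cthickening_mono hε'.2 E))
  · exact Eventually.of_forall fun _ _ => h

lemma eventually_forall_exists_forall_mem_thickening (hf : ∀ i, Continuous (f i))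
    (hE : IsClosed E) (s : Finset ι) :
    ∀ᶠ ε in 𝓝[>] (0 : ℝ), ∀ x, ∃ y, ∀ i ∈ s, f i x ∈ thickening ε E → f i y ∈ E := by
  classical
  filter_upwards [(eventually_all_finset s.powerset).2 fun S _ =>
    eventually_nonempty_iInter_preimage_of_nonempty_thickening hf hE S] with ε hε x
  let S := s.filter fun i => f i x ∈ thickening ε E
  have hxS : x ∈ ⋂ i ∈ S, f i ⁻¹' thickening ε E :=
    mem_iInter₂.2 fun i hi => (Finset.mem_filter.1 hi).2
  obtain ⟨y, hy⟩ := hε S (Finset.mem_powerset.2 (Finset.filter_subset _ _)) ⟨x, hxS⟩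
  exact ⟨y, fun i hi hix => mem_iInter₂.1 hy i (Finset.mem_filter.2 ⟨hi, hix⟩)⟩

end Thickening

lemma iSup_sum_indicator_le_of_forall_exists {X Z ι : Type*} {f : ι → X → Z} {A B : Set Z}
    {s : Finset ι} (h : ∀ x, ∃ y, ∀ i ∈ s, f i x ∈ A → f i y ∈ B) :
    ⨆ x, ∑ i ∈ s, A.indicator (fun _ => (1 : ℝ≥0∞)) (f i x) ≤
      ⨆ y, ∑ i ∈ s, B.indicator (fun _ => (1 : ℝ≥0∞)) (f i y) := by
  refine iSup_le fun x => ?_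
  obtain ⟨y, hy⟩ := h x
  refine le_iSup_of_le y (Finset.sum_le_sum fun i hi => ?_)
  by_cases hx : f i x ∈ A
  · simp [hx, hy i hi hx]
  · simp [hx]

lemma ocap_le_one {X : Type*} (T : X → X) (A : Set X) : ocap T A ≤ 1 := by
  refine (iInf₂_le 1 one_pos).trans ?_
  simp only [Finset.sum_range_one, Function.iterate_zero, id_eq, Nat.cast_one, div_one]
  exact iSup_le fun x => indicator_le_self' (fun _ _ => zero_le_one) x

/-- **Lemma 4.4.** Let `(X,T)` be a dynamical system and `E ⊆ X` a closed subset. For any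
`δ > 0` there exists an open neighborhood `U` of `E` with `ocap(U) < ocap(E) + δ`. -/
theorem ocap_open_neighborhood {X : Type*} [MetricSpace X] [CompactSpace X]
    (T : X ≃ₜ X) (E : Set X) (hE : IsClosed E) (δ : ℝ) (hδ : 0 < δ) :
    ∃ U : Set X, IsOpen U ∧ E ⊆ U ∧ ocap ⇑T U < ocap ⇑T E + ENNReal.ofReal δ := by
  have hlt : ocap T E < ocap T E + ENNReal.ofReal δ :=
    ENNReal.lt_add_right (ne_top_of_le_ne_top ENNReal.one_ne_top (ocap_le_one T E))
      (ENNReal.ofReal_pos.2 hδ).ne'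
  obtain ⟨N, hN, hNE⟩ : ∃ N, ∃ _ : 0 < N,
      (⨆ x, ∑ n ∈ Finset.range N, E.indicator (fun _ => (1 : ℝ≥0∞)) (T^[n] x)) / N <
        ocap T E + ENNReal.ofReal δ := by
    simpa only [ocap, iInf_lt_iff] using hlt
  obtain ⟨ε, hmatch, hε⟩ := ((eventually_forall_exists_forall_mem_thickening
    (f := fun n => (⇑T)^[n]) (fun n => T.continuous.iterate n) hE (Finset.range N)).and
    self_mem_nhdsWithin).exists
  refine ⟨thickening ε E, isOpen_thickening, self_subset_thickening hε E, ?_⟩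
  calc ocap T (thickening ε E)
      ≤ (⨆ x, ∑ n ∈ Finset.range N,
          (thickening ε E).indicator (fun _ => (1 : ℝ≥0∞)) (T^[n] x)) / N := iInf₂_le N hN
    _ ≤ (⨆ x, ∑ n ∈ Finset.range N, E.indicator (fun _ => (1 : ℝ≥0∞)) (T^[n] x)) / N :=
        ENNReal.div_le_div_right (iSup_sum_indicator_le_of_forall_exists hmatch) _
    _ < ocap T E + ENNReal.ofReal δ := hNE
end

section
/- Let (Y,S) be a dynamical system having the small boundary property and let δ > 0. For any open covering Y = V₁ ∪ V₂ ∪ ⋯ ∪ V_m there exist compact subsets E_i ⊂ V_i (1 ≤ i ≤ m) such that E_i ∩ E_j = ∅ for i ≠ j and ocap(Y \ (E₁ ∪ ⋯ ∪ E_m)) < δ. -/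
open scoped ENNReal

/-! Every point has a neighbourhood whose boundary has orbit capacity zero and whose closure
lies in some `V i`. Grouping a finite subcover by `i` and removing from each set the closures
of the earlier ones gives disjoint open sets `O i ⊆ V i` missing only a finite union of such
boundaries, which again has capacity zero. Finally each `O i` is shrunk to the closed set of
points at distance `≥ ε` from its complement. For a fixed time `N`, the number of visits to a
closed set is upper semicontinuous in the starting point, so by compactness the orbit capacity
is upper semicontinuous along decreasing sequences of closed sets; hence for small `ε` the
uncovered part still has capacity `< δ`. -/

open Set Filter Topology Metric Function

section OrbitCapacity

variable {X : Type*} {T : X → X}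

noncomputable def orbitCount (T : X → X) (A : Set X) (N : ℕ) (x : X) : ℝ≥0∞ :=
  ∑ n ∈ Finset.range N, A.indicator (fun _ => (1 : ℝ≥0∞)) (T^[n] x)

theorem ocap_eq_iInf_orbitCount (A : Set X) :
    ocap T A = ⨅ (N : ℕ) (_ : 0 < N), (⨆ x, orbitCount T A N x) / N :=
  rfl

theorem ocap_le_iSup_orbitCount_div {A : Set X} {N : ℕ} (hN : 0 < N) :
    ocap T A ≤ (⨆ x, orbitCount T A N x) / N :=
  iInf₂_le N hN

theorem orbitCount_mono {A B : Set X} (h : A ⊆ B) (N : ℕ) (x : X) :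
    orbitCount T A N x ≤ orbitCount T B N x :=
  Finset.sum_le_sum fun _ _ => indicator_le_indicator_of_subset h (fun _ => zero_le) _

theorem ocap_mono {A B : Set X} (h : A ⊆ B) : ocap T A ≤ ocap T B :=
  iInf₂_mono fun N _ => ENNReal.div_le_div_right (iSup_mono fun x => orbitCount_mono h N x) _

theorem ocap_empty : ocap T ∅ = 0 := by
  refine le_antisymm ((ocap_le_iSup_orbitCount_div one_pos).trans ?_) zero_le
  simp [orbitCount]

theorem orbitCount_add (A : Set X) (N M : ℕ) (x : X) :
    orbitCount T A (N + M) x = orbitCount T A N x + orbitCount T A M (T^[N] x) := by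
  rw [orbitCount, orbitCount, orbitCount, Finset.sum_range_add]
  congr 1
  exact Finset.sum_congr rfl fun k _ => by rw [add_comm, Function.iterate_add_apply]

theorem orbitCount_mul_le (A : Set X) (q N : ℕ) (x : X) :
    orbitCount T A (q * N) x ≤ q * ⨆ y, orbitCount T A N y := by
  induction q with
  | zero => simp [orbitCount]
  | succ q ih =>
    rw [add_mul, one_mul, orbitCount_add, Nat.cast_succ, add_one_mul]
    exact add_le_add ih (le_iSup (orbitCount T A N) _)

theorem iSup_orbitCount_mul_div_le (A : Set X) {q : ℕ} (hq : 0 < q) (N : ℕ) :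
    (⨆ x, orbitCount T A (q * N) x) / ↑(q * N) ≤ (⨆ x, orbitCount T A N x) / N := by
  calc (⨆ x, orbitCount T A (q * N) x) / ↑(q * N)
      ≤ (q * ⨆ x, orbitCount T A N x) / (q * N) := by
        push_cast; gcongr; exact iSup_le (orbitCount_mul_le A q N)
    _ = (⨆ x, orbitCount T A N x) / N :=
        ENNReal.mul_div_mul_left _ _ (by exact_mod_cast hq.ne') (ENNReal.natCast_ne_top q)

theorem orbitCount_union_le (A B : Set X) (N : ℕ) (x : X) :
    orbitCount T (A ∪ B) N x ≤ orbitCount T A N x + orbitCount T B N x := by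
  rw [orbitCount, orbitCount, orbitCount, ← Finset.sum_add_distrib]
  exact Finset.sum_le_sum fun n _ => le_self_add.trans_eq (indicator_union_add_inter_apply _ _ _ _)

-- Subadditivity goes through the common time `N * M`, at which both ratios can only improve.
theorem ocap_union_le (A B : Set X) : ocap T (A ∪ B) ≤ ocap T A + ocap T B := by
  simp only [ocap_eq_iInf_orbitCount, ENNReal.iInf_add, ENNReal.add_iInf]
  refine le_iInf₂ fun M hM => le_iInf₂ fun N hN => ?_
  calc ocap T (A ∪ B)
      ≤ (⨆ x, orbitCount T (A ∪ B) (N * M) x) / ↑(N * M) :=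
        ocap_le_iSup_orbitCount_div (Nat.mul_pos hN hM)
    _ ≤ (⨆ x, orbitCount T A (M * N) x) / ↑(M * N) +
          (⨆ x, orbitCount T B (N * M) x) / ↑(N * M) := by
        rw [mul_comm M N, ← ENNReal.add_div]
        gcongr
        exact iSup_le fun x => (orbitCount_union_le A B _ x).trans
          (add_le_add (le_iSup (orbitCount T A _) x) (le_iSup (orbitCount T B _) x))
    _ ≤ (⨆ x, orbitCount T A N x) / N + (⨆ x, orbitCount T B M x) / M :=
        add_le_add (iSup_orbitCount_mul_div_le A hM N) (iSup_orbitCount_mul_div_le B hN M)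

theorem ocap_biUnion_le {ι : Type*} (s : Finset ι) (A : ι → Set X) :
    ocap T (⋃ i ∈ s, A i) ≤ ∑ i ∈ s, ocap T (A i) := by
  classical
  induction s using Finset.induction_on with
  | empty => simp [ocap_empty]
  | insert i s hi ih =>
    rw [Finset.set_biUnion_insert, Finset.sum_insert hi]
    exact (ocap_union_le _ _).trans (add_le_add le_rfl ih)

theorem ocap_iUnion_le {ι : Type*} [Fintype ι] (A : ι → Set X) :
    ocap T (⋃ i, A i) ≤ ∑ i, ocap T (A i) := by
  simpa using ocap_biUnion_le Finset.univ A

theorem eventually_orbitCount_le_iInter {F : ℕ → Set X} (hF : Antitone F) (N : ℕ) (x : X) :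
    ∀ᶠ p in atTop, orbitCount T (F p) N x ≤ orbitCount T (⋂ p, F p) N x := by
  have hvisit : ∀ n, ∀ᶠ p in atTop, T^[n] x ∈ F p → T^[n] x ∈ ⋂ p, F p := by
    intro n
    by_cases hn : T^[n] x ∈ ⋂ p, F p
    · exact Eventually.of_forall fun _ _ => hn
    · obtain ⟨p₀, hp₀⟩ : ∃ p₀, T^[n] x ∉ F p₀ := by simpa using hn
      filter_upwards [eventually_ge_atTop p₀] with p hp h using absurd (hF hp h) hp₀
  filter_upwards [(Finset.range N).eventually_all.2 fun n _ => hvisit n] with p hp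
  exact Finset.sum_le_sum fun n hn => indicator_apply_le'
    (fun h => (indicator_of_mem (hp n hn h) (fun _ => (1 : ℝ≥0∞))).ge) fun _ => zero_le

variable [TopologicalSpace X]

theorem isOpen_setOf_orbitCount_lt (hT : Continuous T) {A : Set X} (hA : IsClosed A) (N : ℕ)
    (t : ℝ≥0∞) : IsOpen {x | orbitCount T A N x < t} :=
  (upperSemicontinuous_sum fun n _ =>
    (hA.upperSemicontinuous_indicator zero_le).comp (hT.iterate n)).isOpen_preimage t

theorem exists_ocap_lt_of_antitone [CompactSpace X] (hT : Continuous T) {F : ℕ → Set X}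
    (hFc : ∀ p, IsClosed (F p)) (hF : Antitone F) {A : Set X} (hA : ⋂ p, F p ⊆ A)
    {c : ℝ≥0∞} (h : ocap T A < c) : ∃ p, ocap T (F p) < c := by
  obtain ⟨N, hN, hNc⟩ : ∃ N, ∃ _ : 0 < N, (⨆ x, orbitCount T A N x) / N < c := by
    simpa only [ocap_eq_iInf_orbitCount, iInf_lt_iff] using h
  obtain ⟨r, hNr, hrc⟩ := exists_between hNc
  have hAr : ∀ x, orbitCount T A N x < r * N := fun x =>
    (le_iSup (orbitCount T A N) x).trans_lt
      ((ENNReal.div_lt_iff (Or.inl (by exact_mod_cast hN.ne')) (Or.inl (by simp))).1 hNr)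
  obtain ⟨p, hp⟩ := isCompact_univ.elim_directed_cover
    (fun p => {x | orbitCount T (F p) N x < r * N})
    (fun p => isOpen_setOf_orbitCount_lt hT (hFc p) N _)
    (fun x _ => mem_iUnion.2 ((eventually_orbitCount_le_iInter hF N x).exists.imp
      fun _ hp => hp.trans_lt ((orbitCount_mono hA N x).trans_lt (hAr x))))
    (Monotone.directed_le fun p q hpq x hx => (orbitCount_mono (hF hpq) N x).trans_lt hx)
  refine ⟨p, (ocap_le_iSup_orbitCount_div hN).trans_lt (lt_of_le_of_lt ?_ hrc)⟩
  rw [ENNReal.div_le_iff (by exact_mod_cast hN.ne') (by simp)]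
  exact iSup_le fun x => (hp (mem_univ x)).le

end OrbitCapacity

theorem exists_isClosed_subset_ocap_compl_lt {X : Type*} [PseudoMetricSpace X] [CompactSpace X]
    {T : X → X} (hT : Continuous T) {ι : Type*} {O : ι → Set X} (hO : ∀ i, IsOpen (O i))
    {c : ℝ≥0∞} (h : ocap T (⋃ i, O i)ᶜ < c) :
    ∃ E : ι → Set X, (∀ i, IsClosed (E i)) ∧ (∀ i, E i ⊆ O i) ∧ ocap T (⋃ i, E i)ᶜ < c := by
  set ε : ℕ → ℝ := fun p => 1 / (p + 1)
  have hε : ∀ p, 0 < ε p := fun p => Nat.one_div_pos_of_nat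
  have hFanti : Antitone fun p => ⋂ i, cthickening (ε p) (O i)ᶜ := fun p q hpq =>
    iInter_mono fun i => cthickening_mono (Nat.one_div_le_one_div hpq) _
  have hFinter : ⋂ p, ⋂ i, cthickening (ε p) (O i)ᶜ ⊆ (⋃ i, O i)ᶜ := by
    intro x hx
    simp only [compl_iUnion, mem_iInter] at hx ⊢
    intro i
    rw [← (hO i).isClosed_compl.closure_eq, closure_eq_iInter_cthickening, mem_iInter₂]
    intro δ hδ
    obtain ⟨p, hp⟩ := exists_nat_one_div_lt hδ
    exact cthickening_mono hp.le _ (hx p i)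
  obtain ⟨p, hp⟩ := exists_ocap_lt_of_antitone hT
    (fun p => isClosed_iInter fun i => isClosed_cthickening) hFanti hFinter h
  refine ⟨fun i => (thickening (ε p) (O i)ᶜ)ᶜ, fun i => isOpen_thickening.isClosed_compl,
    fun i => compl_subset_comm.1 (self_subset_thickening (hε p) _), ?_⟩
  refine (ocap_mono ?_).trans_lt hp
  simp only [compl_iUnion, compl_compl]
  exact iInter_mono fun i => thickening_subset_cthickening _ _

theorem frontier_biUnion_finset_subset {X ι : Type*} [TopologicalSpace X] (s : Finset ι)
    (f : ι → Set X) : frontier (⋃ i ∈ s, f i) ⊆ ⋃ i ∈ s, frontier (f i) := by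
  intro x ⟨hcl, hint⟩
  rw [Finset.closure_biUnion] at hcl
  obtain ⟨i, hi, hxi⟩ := mem_iUnion₂.1 hcl
  exact mem_iUnion₂.2 ⟨i, hi, hxi, fun h => hint (interior_mono (subset_biUnion_of_mem hi) h)⟩

namespace SmallBoundaryProperty

variable {X : Type*} [TopologicalSpace X] {T : X → X}

theorem exists_isOpen_closure_subset [RegularSpace X] (hT : SmallBoundaryProperty T) {x : X}
    {U : Set X} (hU : U ∈ 𝓝 x) :
    ∃ W, IsOpen W ∧ x ∈ W ∧ closure W ⊆ U ∧ ocap T (frontier W) = 0 := by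
  obtain ⟨K, hK, hKc, hKU⟩ := exists_mem_nhds_isClosed_subset hU
  obtain ⟨W, hWo, hxW, hWK, hW⟩ :=
    hT x (interior K) isOpen_interior (mem_interior_iff_mem_nhds.2 hK)
  exact ⟨W, hWo, hxW, (closure_minimal (hWK.trans interior_subset) hKc).trans hKU, hW⟩

theorem exists_shrinking [RegularSpace X] [CompactSpace X] (hT : SmallBoundaryProperty T)
    {ι : Type*} {V : ι → Set X} (hV : ∀ i, IsOpen (V i)) (hcover : ⋃ i, V i = univ) :
    ∃ W : ι → Set X, (∀ i, IsOpen (W i)) ∧ (∀ i, closure (W i) ⊆ V i) ∧ ⋃ i, W i = univ ∧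
      ∀ i, ocap T (frontier (W i)) = 0 := by
  classical
  have hx : ∀ x, ∃ i, x ∈ V i := fun x => mem_iUnion.1 (hcover ▸ mem_univ x)
  choose idx hidx using hx
  choose U hUo hxU hUV hU using fun x =>
    hT.exists_isOpen_closure_subset ((hV (idx x)).mem_nhds (hidx x))
  obtain ⟨t, ht⟩ := isCompact_univ.elim_finite_subcover U hUo fun x _ => mem_iUnion.2 ⟨x, hxU x⟩
  refine ⟨fun i => ⋃ x ∈ t.filter (idx · = i), U x, fun i => isOpen_biUnion fun x _ => hUo x,
    fun i => ?_, ?_, fun i => ?_⟩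
  · rw [Finset.closure_biUnion]
    exact iUnion₂_subset fun x hx => (Finset.mem_filter.1 hx).2 ▸ hUV x
  · refine eq_univ_of_forall fun y => ?_
    obtain ⟨x, hx, hyx⟩ := mem_iUnion₂.1 (ht (mem_univ y))
    exact mem_iUnion.2 ⟨idx x, mem_iUnion₂.2 ⟨x, Finset.mem_filter.2 ⟨hx, rfl⟩, hyx⟩⟩
  · refine le_antisymm ?_ zero_le
    calc ocap T (frontier (⋃ x ∈ t.filter (idx · = i), U x))
        ≤ ∑ x ∈ t.filter (idx · = i), ocap T (frontier (U x)) :=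
          (ocap_mono (frontier_biUnion_finset_subset _ _)).trans (ocap_biUnion_le _ _)
      _ = 0 := Finset.sum_eq_zero fun x _ => hU x

end SmallBoundaryProperty

section ClosureDisjointed

variable {X ι : Type*} [TopologicalSpace X]

def closureDisjointed [LT ι] (W : ι → Set X) (i : ι) : Set X :=
  W i \ ⋃ j < i, closure (W j)

theorem closureDisjointed_subset [LT ι] (W : ι → Set X) (i : ι) : closureDisjointed W i ⊆ W i :=
  sdiff_subset

theorem isOpen_closureDisjointed [LT ι] [Finite ι] {W : ι → Set X} (hW : ∀ i, IsOpen (W i))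
    (i : ι) : IsOpen (closureDisjointed W i) :=
  (hW i).sdiff (isClosed_iUnion_of_finite fun _ => isClosed_iUnion_of_finite fun _ =>
    isClosed_closure)

theorem pairwise_disjoint_closureDisjointed [LinearOrder ι] (W : ι → Set X) :
    Pairwise (Disjoint on closureDisjointed W) :=
  (pairwise_disjoint_on _).2 fun i _ hij => disjoint_left.2 fun _ hi hj =>
    hj.2 (mem_iUnion₂.2 ⟨i, hij, subset_closure hi.1⟩)

-- A point on no frontier lies in `W i` for the least `i` with `x ∈ closure (W i)`.
theorem compl_iUnion_closureDisjointed_subset [LinearOrder ι] [WellFoundedLT ι]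
    {W : ι → Set X} (hW : ∀ i, IsOpen (W i)) (hcover : ⋃ i, W i = univ) :
    (⋃ i, closureDisjointed W i)ᶜ ⊆ ⋃ i, frontier (W i) := by
  rw [compl_subset_comm]
  intro x hx
  obtain ⟨i₀, hi₀⟩ := mem_iUnion.1 (hcover ▸ mem_univ x)
  obtain ⟨i, hi, hmin⟩ := wellFounded_lt.has_min {i | x ∈ closure (W i)} ⟨i₀, subset_closure hi₀⟩
  have hxi : x ∈ W i := by
    by_contra hxi
    exact hx (mem_iUnion.2 ⟨i, (hW i).frontier_eq ▸ ⟨hi, hxi⟩⟩)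
  exact mem_iUnion.2 ⟨i, hxi, fun h => by
    obtain ⟨j, hji, hj⟩ := mem_iUnion₂.1 h
    exact hmin j hj hji⟩

end ClosureDisjointed

/-- **Lemma 4.6.** Let `(Y,S)` be a dynamical system with the small boundary property and
`δ > 0`. For any open covering `Y = V₁ ∪ ⋯ ∪ V_m` there exist compact sets `E_i ⊆ V_i`
which are pairwise disjoint and satisfy `ocap(Y \ (E₁ ∪ ⋯ ∪ E_m)) < δ`. -/
theorem sbp_disjoint_compact_cover {Y : Type*} [MetricSpace Y] [CompactSpace Y]
    (S : Y ≃ₜ Y) (hsbp : SmallBoundaryProperty ⇑S) (δ : ℝ) (hδ : 0 < δ)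
    {m : ℕ} (V : Fin m → Set Y) (hVopen : ∀ i, IsOpen (V i))
    (hVcover : (⋃ i, V i) = Set.univ) :
    ∃ E : Fin m → Set Y,
      (∀ i, IsCompact (E i)) ∧ (∀ i, E i ⊆ V i) ∧
      (∀ i j : Fin m, i ≠ j → Disjoint (E i) (E j)) ∧
      ocap ⇑S (Set.univ \ ⋃ i, E i) < ENNReal.ofReal δ := by
  obtain ⟨W, hWo, hWV, hWcover, hW⟩ := hsbp.exists_shrinking hVopen hVcover
  have hO : ocap S (⋃ i, closureDisjointed W i)ᶜ < ENNReal.ofReal δ :=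
    calc ocap S (⋃ i, closureDisjointed W i)ᶜ
        ≤ ∑ i, ocap S (frontier (W i)) :=
          (ocap_mono (compl_iUnion_closureDisjointed_subset hWo hWcover)).trans
            (ocap_iUnion_le _)
      _ = 0 := Finset.sum_eq_zero fun i _ => hW i
      _ < ENNReal.ofReal δ := ENNReal.ofReal_pos.2 hδ
  obtain ⟨E, hEc, hEO, hE⟩ :=
    exists_isClosed_subset_ocap_compl_lt S.continuous (isOpen_closureDisjointed hWo) hO
  refine ⟨E, fun i => (hEc i).isCompact, fun i => ?_, fun i j hij => ?_, ?_⟩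
  · exact (hEO i).trans ((closureDisjointed_subset W i).trans (subset_closure.trans (hWV i)))
  · exact (pairwise_disjoint_closureDisjointed W hij).mono (hEO i) (hEO j)
  · rwa [← compl_eq_univ_sdiff]
end
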